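/- arXiv:1905.12148 — 2 statements merged into one kernel-verified Lean document; each statement's English description precedes it below -/
import Mathlib

section
/- The function g is nowhere differentiable on its domain: for every x₀ ∈ D there is no real number L such that (g(x) − g(x₀))/(x − x₀) tends to L as x tends to x₀ within D \ {x₀}. -/
open Filter Topology MeasureTheory

/-- `α` is a sequence with all terms in `Θ = {1,…,q-1} \ {u}`. -/
def ThetaSeq (q u : ℕ) (α : ℕ → ℕ) : Prop :=
  ∀ n, 1 ≤ α n ∧ α n ≤ q - 1 ∧ α n ≠ u

/-- `S_{n+1}(α) = α_1 + ⋯ + α_{n+1}` (0-indexed: `α i` is the paper's `α_{i+1}`). -/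
def Ssum (α : ℕ → ℕ) (n : ℕ) : ℕ := ∑ i ∈ Finset.range (n + 1), α i

/-- `h(α) = u/(q-1) + ∑_{n≥1} (α_n - u) q^{-S_n(α)}`. -/
noncomputable def hmap (q u : ℕ) (α : ℕ → ℕ) : ℝ :=
  (u : ℝ) / ((q : ℝ) - 1) +
    ∑' n : ℕ, ((α n : ℝ) - (u : ℝ)) / (q : ℝ) ^ (Ssum α n)

/-- `Φ(α) = ∑_{n≥1} α_n q^{-n}`. -/
noncomputable def Phi (q : ℕ) (α : ℕ → ℕ) : ℝ :=
  ∑' n : ℕ, (α n : ℝ) / (q : ℝ) ^ (n + 1)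

/-- `D = {h(α) : α ∈ Θ^{ℕ≥1}}`. -/
def Dset (q u : ℕ) : Set ℝ := {x | ∃ α, ThetaSeq q u α ∧ hmap q u α = x}

/-- `E = {Φ(α) : α ∈ Θ^{ℕ≥1}}`. -/
def Eset (q u : ℕ) : Set ℝ := {y | ∃ α, ThetaSeq q u α ∧ Phi q α = y}

/-!
Splicing a tail `τ` into `x₀ = h(α)` after `N` digits moves `h` by
`q^{-(α₁+⋯+α_N)} (h(τ) - h(σᴺα))` and `Φ` by `q^{-N} (Φ(τ) - Φ(σᴺα))`, where `σᴺα` is the tail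
of `α` after `N` digits. Hence `g` is self-affine: the chord slope of `g` from `x₀` to the spliced
point is `q^{E_N}` times the chord slope of `g` between `h(σᴺα)` and `h(τ)`, with
`E_N = Σ_{n ≤ N} (α_n - 1)`. Since `g ∘ h = Φ`, distinct values of `Φ` force distinct points of `D`.

If `α_n ≠ 1` infinitely often, then `E_N → ∞`; choosing `τ` among two sequences with distinct `Φ`,
the chord slopes on the right stay bounded away from `0` because `D` is bounded, so the difference
quotients at `x₀` are unbounded. If `α` ends in `1, 1, …`, then `E_N` is eventually a constant `m`
and a derivative `L` would equal `q^m` times the slope of `g` between `h(1̄)` and `h(τ)` for every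
admissible `τ`. Taking `τ = b̄` and `τ = (b, 1, 1, …)` with `b ≥ 2` puts the graph of `g` over
the three points `h(1̄), h(b̄), h(b, 1, 1, …)` on one line of slope `s ≠ 0`, whereas self-affinity
gives slope `q^{b-1} s` between the last two.
-/

noncomputable def hSeries (q u : ℕ) (α : ℕ → ℕ) : ℝ :=
  ∑' n : ℕ, ((α n : ℝ) - (u : ℝ)) / (q : ℝ) ^ (Ssum α n)

def excess (α : ℕ → ℕ) (N : ℕ) : ℕ := ∑ i ∈ Finset.range N, (α i - 1)

section Series

variable {q u : ℕ} {α : ℕ → ℕ}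

lemma hmap_sub_hmap (σ τ : ℕ → ℕ) :
    hmap q u σ - hmap q u τ = hSeries q u σ - hSeries q u τ :=
  add_sub_add_left_eq_sub _ _ _

lemma sum_range_eq_add_excess (h1 : ∀ n, 1 ≤ α n) (N : ℕ) :
    ∑ i ∈ Finset.range N, α i = N + excess α N := by
  calc ∑ i ∈ Finset.range N, α i = ∑ i ∈ Finset.range N, (1 + (α i - 1)) :=
        Finset.sum_congr rfl fun i _ => by have := h1 i; omega
    _ = N + excess α N := by simp [Finset.sum_add_distrib, excess]

lemma le_Ssum (h1 : ∀ n, 1 ≤ α n) (n : ℕ) : n ≤ Ssum α n := by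
  rw [Ssum, sum_range_eq_add_excess h1]; omega

lemma excess_succ (N : ℕ) : excess α (N + 1) = excess α N + (α N - 1) :=
  Finset.sum_range_succ _ _

lemma excess_mono : Monotone (excess α) := fun _ _ h =>
  Finset.sum_le_sum_of_subset (Finset.range_mono h)

lemma hasSum_inv_pow (hq : 1 < q) : HasSum (fun n => ((q : ℝ)⁻¹) ^ n) (1 - (q : ℝ)⁻¹)⁻¹ :=
  hasSum_geometric_of_lt_one (inv_nonneg.2 q.cast_nonneg)
    (inv_lt_one_of_one_lt₀ (Nat.one_lt_cast.2 hq))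

lemma abs_hSeries_term_le (hq : 1 < q) (h1 : ∀ n, 1 ≤ α n) (hle : ∀ n, α n ≤ q - 1) (n : ℕ) :
    |((α n : ℝ) - u) / (q : ℝ) ^ (Ssum α n)| ≤ (q + u) * ((q : ℝ)⁻¹) ^ n := by
  have hq1 : (1 : ℝ) ≤ q := by exact_mod_cast hq.le
  have hq0 : (0 : ℝ) < q := by linarith
  have hαq : (α n : ℝ) ≤ q := by exact_mod_cast (hle n).trans (Nat.sub_le q 1)
  have hnum : |(α n : ℝ) - u| ≤ q + u := by
    rw [abs_le]; constructor <;> linarith [(α n).cast_nonneg (α := ℝ), u.cast_nonneg (α := ℝ)]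
  rw [abs_div, abs_of_pos (pow_pos hq0 _), inv_pow, ← div_eq_mul_inv]
  exact div_le_div₀ (by positivity) hnum (by positivity) (pow_le_pow_right₀ hq1 (le_Ssum h1 n))

lemma summable_hSeries (hq : 1 < q) (h1 : ∀ n, 1 ≤ α n) (hle : ∀ n, α n ≤ q - 1) :
    Summable fun n => ((α n : ℝ) - u) / (q : ℝ) ^ (Ssum α n) :=
  .of_norm_bounded ((hasSum_inv_pow hq).summable.mul_left _) (abs_hSeries_term_le hq h1 hle)

lemma abs_hSeries_le (hq : 1 < q) (h1 : ∀ n, 1 ≤ α n) (hle : ∀ n, α n ≤ q - 1) :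
    |hSeries q u α| ≤ (q + u) * (1 - (q : ℝ)⁻¹)⁻¹ :=
  tsum_of_norm_bounded (f := fun n => ((α n : ℝ) - u) / (q : ℝ) ^ (Ssum α n))
    ((hasSum_inv_pow hq).mul_left _) (abs_hSeries_term_le hq h1 hle)

lemma abs_hmap_sub_le (hq : 1 < q) {σ τ : ℕ → ℕ} (hσ : ThetaSeq q u σ) (hτ : ThetaSeq q u τ) :
    |hmap q u σ - hmap q u τ| ≤ 2 * ((q + u) * (1 - (q : ℝ)⁻¹)⁻¹) := by
  rw [hmap_sub_hmap]
  have := abs_hSeries_le (u := u) hq (fun n => (hσ n).1) (fun n => (hσ n).2.1)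
  have := abs_hSeries_le (u := u) hq (fun n => (hτ n).1) (fun n => (hτ n).2.1)
  linarith [abs_sub (hSeries q u σ) (hSeries q u τ)]

lemma hSeries_eq_sum_add (hq : 1 < q) (h1 : ∀ n, 1 ≤ α n) (hle : ∀ n, α n ≤ q - 1) (N : ℕ) :
    hSeries q u α = ∑ n ∈ Finset.range N, ((α n : ℝ) - u) / (q : ℝ) ^ (Ssum α n)
      + ((q : ℝ) ^ ∑ i ∈ Finset.range N, α i)⁻¹ * hSeries q u (fun m => α (N + m)) := by
  rw [hSeries, ← (summable_hSeries hq h1 hle).sum_add_tsum_nat_add N, hSeries, ← tsum_mul_left]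
  congr 2 with m
  rw [Ssum, Ssum, add_comm m N, add_assoc, Finset.sum_range_add α N (m + 1), pow_add]
  field_simp

lemma summable_Phi (hq : 1 < q) (hle : ∀ n, α n ≤ q - 1) :
    Summable fun n => (α n : ℝ) / (q : ℝ) ^ (n + 1) := by
  refine .of_norm_bounded (hasSum_inv_pow hq).summable fun n => ?_
  have hαq : (α n : ℝ) ≤ q := by exact_mod_cast (hle n).trans (Nat.sub_le q 1)
  rw [Real.norm_eq_abs, abs_of_nonneg (by positivity), inv_pow, pow_succ,
    div_le_iff₀ (by positivity)]
  calc (α n : ℝ) ≤ q := hαq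
    _ = ((q : ℝ) ^ n)⁻¹ * ((q : ℝ) ^ n * q) := by field_simp

lemma Phi_eq_sum_add (hq : 1 < q) (hle : ∀ n, α n ≤ q - 1) (N : ℕ) :
    Phi q α = ∑ n ∈ Finset.range N, (α n : ℝ) / (q : ℝ) ^ (n + 1)
      + ((q : ℝ) ^ N)⁻¹ * Phi q (fun m => α (N + m)) := by
  rw [Phi, ← (summable_Phi hq hle).sum_add_tsum_nat_add N, Phi, ← tsum_mul_left]
  congr 2 with m
  rw [add_comm m N, add_assoc, pow_add]
  field_simp

lemma Phi_const (hq : 1 < q) (e : ℕ) : Phi q (fun _ => e) = e / (q - 1) := by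
  have hq1 : (1 : ℝ) < q := Nat.one_lt_cast.2 hq
  calc Phi q (fun _ => e) = e * (q : ℝ)⁻¹ * ∑' n : ℕ, ((q : ℝ)⁻¹) ^ n := by
        rw [Phi, ← tsum_mul_left]
        congr 1 with n
        rw [pow_succ, inv_pow]
        field_simp
    _ = e / (q - 1) := by
        rw [(hasSum_inv_pow hq).tsum_eq]
        have : (q : ℝ) - 1 ≠ 0 := by linarith
        field_simp

lemma Phi_const_injective (hq : 1 < q) : Function.Injective fun e : ℕ => Phi q fun _ => e := by
  intro c d h
  have hq1 : (1 : ℝ) < q := Nat.one_lt_cast.2 hq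
  have : (q : ℝ) - 1 ≠ 0 := by linarith
  simpa [Phi_const hq, div_left_inj' this] using h

end Series

def splice (α τ : ℕ → ℕ) (N : ℕ) : ℕ → ℕ := fun n => if n < N then α n else τ (n - N)

section Splice

variable {q u : ℕ} {α τ : ℕ → ℕ}

lemma splice_of_lt {N n : ℕ} (h : n < N) : splice α τ N n = α n := if_pos h

@[simp]
lemma splice_add (N m : ℕ) : splice α τ N (N + m) = τ m := by simp [splice]

lemma ThetaSeq.shift (hα : ThetaSeq q u α) (N : ℕ) : ThetaSeq q u fun m => α (N + m) :=
  fun m => hα (N + m)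

lemma ThetaSeq.splice (hα : ThetaSeq q u α) (hτ : ThetaSeq q u τ) (N : ℕ) :
    ThetaSeq q u (splice α τ N) := by
  intro n
  unfold _root_.splice
  split_ifs
  exacts [hα n, hτ (n - N)]

lemma hmap_splice_sub (hq : 1 < q) (hα : ThetaSeq q u α) (hτ : ThetaSeq q u τ) (N : ℕ) :
    hmap q u (splice α τ N) - hmap q u α
      = ((q : ℝ) ^ ∑ i ∈ Finset.range N, α i)⁻¹
          * (hmap q u τ - hmap q u fun m => α (N + m)) := by
  have hατ := hα.splice hτ N
  have hpre : ∀ i ∈ Finset.range N, splice α τ N i = α i :=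
    fun i hi => splice_of_lt (Finset.mem_range.1 hi)
  have hSsum : ∀ n ∈ Finset.range N, Ssum (splice α τ N) n = Ssum α n := fun n hn =>
    Finset.sum_congr rfl fun i hi => splice_of_lt (by simp at hn hi; omega)
  rw [hmap_sub_hmap, hmap_sub_hmap,
    hSeries_eq_sum_add hq (fun n => (hατ n).1) (fun n => (hατ n).2.1) N,
    hSeries_eq_sum_add hq (fun n => (hα n).1) (fun n => (hα n).2.1) N,
    Finset.sum_congr rfl hpre,
    Finset.sum_congr rfl fun n hn => by rw [hpre n hn, hSsum n hn]]
  simp only [splice_add]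
  ring

lemma Phi_splice_sub (hq : 1 < q) (hα : ThetaSeq q u α) (hτ : ThetaSeq q u τ) (N : ℕ) :
    Phi q (splice α τ N) - Phi q α
      = ((q : ℝ) ^ N)⁻¹ * (Phi q τ - Phi q fun m => α (N + m)) := by
  have hατ := hα.splice hτ N
  rw [Phi_eq_sum_add hq (fun n => (hατ n).2.1) N, Phi_eq_sum_add hq (fun n => (hα n).2.1) N,
    Finset.sum_congr rfl fun n hn => by rw [splice_of_lt (Finset.mem_range.1 hn)]]
  simp only [splice_add]
  ring

lemma Phi_splice_ne (hq : 1 < q) (hα : ThetaSeq q u α) (hτ : ThetaSeq q u τ) {N : ℕ}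
    (h : Phi q τ ≠ Phi q fun m => α (N + m)) : Phi q (splice α τ N) ≠ Phi q α := by
  rw [← sub_ne_zero, Phi_splice_sub hq hα hτ N]
  exact mul_ne_zero (by positivity) (sub_ne_zero.2 h)

lemma abs_hmap_splice_sub_le (hq : 1 < q) (hα : ThetaSeq q u α) (hτ : ThetaSeq q u τ) (N : ℕ) :
    |hmap q u (splice α τ N) - hmap q u α|
      ≤ 2 * ((q + u) * (1 - (q : ℝ)⁻¹)⁻¹) * ((q : ℝ)⁻¹) ^ N := by
  have hq1 : (1 : ℝ) ≤ q := by exact_mod_cast hq.le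
  have hdiam := abs_hmap_sub_le hq hτ (hα.shift N)
  rw [hmap_splice_sub hq hα hτ, abs_mul, abs_inv, abs_of_pos (by positivity), mul_comm,
    inv_pow, sum_range_eq_add_excess (fun n => (hα n).1)]
  gcongr
  exacts [(abs_nonneg _).trans hdiam, by omega]

lemma tendsto_hmap_splice (hq : 1 < q) (hα : ThetaSeq q u α) (τ : ℕ → ℕ → ℕ)
    (hτ : ∀ N, ThetaSeq q u (τ N))
    (hne : ∀ᶠ N in atTop, hmap q u (splice α (τ N) N) ≠ hmap q u α) :
    Tendsto (fun N => hmap q u (splice α (τ N) N)) atTop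
      (𝓝[Dset q u \ {hmap q u α}] (hmap q u α)) := by
  refine tendsto_nhdsWithin_iff.2 ⟨?_, hne.mono fun N hN => ⟨⟨_, hα.splice (hτ N) N, rfl⟩, hN⟩⟩
  rw [tendsto_iff_norm_sub_tendsto_zero]
  refine squeeze_zero_norm
    (fun N => (abs_abs _).trans_le (abs_hmap_splice_sub_le hq hα (hτ N) N)) ?_
  simpa using (hasSum_inv_pow hq).summable.tendsto_atTop_zero.const_mul
    (2 * ((q + u) * (1 - (q : ℝ)⁻¹)⁻¹))

end Splice

theorem slope_eq_of_slope_eq_of_slope_eq {k : Type*} [Field k] {f : k → k} {a b c s : k}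
    (hbc : b ≠ c) (hab : slope f a b = s) (hac : slope f a c = s) : slope f b c = s := by
  have h1 := sub_smul_slope f a b
  have h2 := sub_smul_slope f a c
  simp only [smul_eq_mul, vsub_eq_sub, hab, hac] at h1 h2
  rw [slope_def_field, div_eq_iff (sub_ne_zero.2 hbc.symm)]
  linear_combination h1 - h2

lemma half_abs_sub_le_or (a b x : ℝ) : |a - b| / 2 ≤ |a - x| ∨ |a - b| / 2 ≤ |b - x| := by
  by_contra! h
  linarith [abs_sub_le a x b, abs_sub_comm x b]

section Slope

variable {q u : ℕ} {g : ℝ → ℝ} {α τ : ℕ → ℕ}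

lemma hmap_ne_of_Phi_ne (hg : ∀ α, ThetaSeq q u α → g (hmap q u α) = Phi q α)
    (hα : ThetaSeq q u α) (hτ : ThetaSeq q u τ) (h : Phi q α ≠ Phi q τ) :
    hmap q u α ≠ hmap q u τ := fun heq => h (by rw [← hg α hα, ← hg τ hτ, heq])

lemma slope_hmap_splice (hq : 1 < q) (hg : ∀ α, ThetaSeq q u α → g (hmap q u α) = Phi q α)
    (hα : ThetaSeq q u α) (hτ : ThetaSeq q u τ) (N : ℕ) :
    slope g (hmap q u α) (hmap q u (splice α τ N))
      = (q : ℝ) ^ excess α N * slope g (hmap q u fun m => α (N + m)) (hmap q u τ) := by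
  simp only [slope_def_field]
  rw [hg _ (hα.splice hτ N), hg _ hα, hg _ hτ, hg _ (hα.shift N), Phi_splice_sub hq hα hτ,
    hmap_splice_sub hq hα hτ, sum_range_eq_add_excess (fun n => (hα n).1), div_eq_mul_inv,
    div_eq_mul_inv, mul_inv, inv_inv, pow_add]
  field_simp

lemma tendsto_slope_hmap_splice (hq : 1 < q)
    (hg : ∀ α, ThetaSeq q u α → g (hmap q u α) = Phi q α) (hα : ThetaSeq q u α)
    (τ : ℕ → ℕ → ℕ) (hτ : ∀ N, ThetaSeq q u (τ N))
    (hne : ∀ᶠ N in atTop, Phi q (τ N) ≠ Phi q fun m => α (N + m)) {L : ℝ}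
    (hL : Tendsto (slope g (hmap q u α)) (𝓝[Dset q u \ {hmap q u α}] (hmap q u α)) (𝓝 L)) :
    Tendsto (fun N => (q : ℝ) ^ excess α N * slope g (hmap q u fun m => α (N + m)) (hmap q u (τ N)))
      atTop (𝓝 L) := by
  have hz : ∀ᶠ N in atTop, hmap q u (splice α (τ N) N) ≠ hmap q u α := hne.mono fun N hN =>
    hmap_ne_of_Phi_ne hg (hα.splice (hτ N) N) hα (Phi_splice_ne hq hα (hτ N) hN)
  exact (hL.comp (tendsto_hmap_splice hq hα τ hτ hz)).congr fun N =>
    slope_hmap_splice hq hg hα (hτ N) N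

lemma abs_Phi_sub_div_le_abs_slope (hq : 1 < q)
    (hg : ∀ α, ThetaSeq q u α → g (hmap q u α) = Phi q α) (hα : ThetaSeq q u α)
    (hτ : ThetaSeq q u τ) :
    |Phi q τ - Phi q α| / (2 * ((q + u) * (1 - (q : ℝ)⁻¹)⁻¹))
      ≤ |slope g (hmap q u α) (hmap q u τ)| := by
  rw [slope_def_field, hg _ hα, hg _ hτ, abs_div]
  rcases eq_or_ne (Phi q τ) (Phi q α) with h | h
  · simp [h]
  · exact div_le_div_of_nonneg_left (abs_nonneg _)
      (abs_pos.2 (sub_ne_zero.2 (hmap_ne_of_Phi_ne hg hτ hα h))) (abs_hmap_sub_le hq hτ hα)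

end Slope

section Cases

variable {q u : ℕ} {g : ℝ → ℝ} {α : ℕ → ℕ}

lemma tendsto_excess_atTop (h1 : ∀ n, 1 ≤ α n) (h : ∃ᶠ n in atTop, α n ≠ 1) :
    Tendsto (excess α) atTop atTop := by
  refine tendsto_atTop_atTop_of_monotone excess_mono fun b => ?_
  induction b with
  | zero => exact ⟨0, Nat.zero_le _⟩
  | succ b ih =>
    obtain ⟨a, ha⟩ := ih
    obtain ⟨n, han, hn⟩ := frequently_atTop.1 h a
    have := excess_mono (α := α) han
    have := h1 n
    exact ⟨n + 1, by rw [excess_succ]; omega⟩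

lemma not_tendsto_slope_of_frequently_ne_one (hq : 1 < q)
    (hg : ∀ α, ThetaSeq q u α → g (hmap q u α) = Phi q α) (hα : ThetaSeq q u α)
    (hfreq : ∃ᶠ n in atTop, α n ≠ 1) {σ₁ σ₂ : ℕ → ℕ} (hσ₁ : ThetaSeq q u σ₁)
    (hσ₂ : ThetaSeq q u σ₂) (hσ : Phi q σ₁ ≠ Phi q σ₂) (L : ℝ) :
    ¬ Tendsto (slope g (hmap q u α)) (𝓝[Dset q u \ {hmap q u α}] (hmap q u α)) (𝓝 L) := by
  intro hL
  set δ := |Phi q σ₁ - Phi q σ₂|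
  set C := 2 * ((q + u) * (1 - (q : ℝ)⁻¹)⁻¹)
  have hδ : 0 < δ := abs_pos.2 (sub_ne_zero.2 hσ)
  have hC : 0 < C := by
    have := abs_hmap_sub_le hq hσ₁ hσ₂
    have : hmap q u σ₁ ≠ hmap q u σ₂ := hmap_ne_of_Phi_ne hg hσ₁ hσ₂ hσ
    linarith [abs_pos.2 (sub_ne_zero.2 this)]
  have hpick : ∀ N, ∃ τ, ThetaSeq q u τ ∧ δ / 2 ≤ |Phi q τ - Phi q fun m => α (N + m)| :=
    fun N => (half_abs_sub_le_or _ _ _).elim (fun h => ⟨σ₁, hσ₁, h⟩) (fun h => ⟨σ₂, hσ₂, h⟩)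
  choose τ hτ hfar using hpick
  have hne : ∀ N, Phi q (τ N) ≠ Phi q fun m => α (N + m) := fun N h => by
    have := hfar N
    rw [h, sub_self, abs_zero] at this
    linarith
  have hslope : ∀ N, δ / 2 / C ≤ |slope g (hmap q u fun m => α (N + m)) (hmap q u (τ N))| :=
    fun N => (div_le_div_of_nonneg_right (hfar N) hC.le).trans
      (abs_Phi_sub_div_le_abs_slope hq hg (hα.shift N) (hτ N))
  refine not_tendsto_nhds_of_tendsto_atTop ?_ _
    (tendsto_slope_hmap_splice hq hg hα τ hτ (.of_forall hne) hL).abs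
  refine tendsto_atTop_mono (fun N => ?_) ((((tendsto_pow_atTop_atTop_of_one_lt
    (Nat.one_lt_cast.2 hq)).comp (tendsto_excess_atTop (fun n => (hα n).1) hfreq)).atTop_mul_const
    (by positivity : 0 < δ / 2 / C)))
  rw [abs_mul, abs_of_pos (pow_pos (Nat.cast_pos.2 (by omega)) _)]
  exact mul_le_mul_of_nonneg_left (hslope N) (pow_nonneg q.cast_nonneg _)

lemma eq_mul_slope_of_tail_eq_one (hq : 1 < q)
    (hg : ∀ α, ThetaSeq q u α → g (hmap q u α) = Phi q α) (hα : ThetaSeq q u α) {N₀ : ℕ}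
    (hN₀ : ∀ n ≥ N₀, α n = 1) {L : ℝ}
    (hL : Tendsto (slope g (hmap q u α)) (𝓝[Dset q u \ {hmap q u α}] (hmap q u α)) (𝓝 L))
    {τ : ℕ → ℕ} (hτ : ThetaSeq q u τ) (hΦ : Phi q τ ≠ Phi q fun _ => 1) :
    L = (q : ℝ) ^ excess α N₀ * slope g (hmap q u fun _ => 1) (hmap q u τ) := by
  have htail : ∀ N ≥ N₀, (fun m => α (N + m)) = fun _ => 1 :=
    fun N hN => funext fun m => hN₀ _ (by omega)
  have hexcess : ∀ N ≥ N₀, excess α N = excess α N₀ := by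
    intro N hN
    induction N, hN using Nat.le_induction with
    | base => rfl
    | succ N hN ih => simp [excess_succ, ih, hN₀ N hN]
  have hlim := tendsto_slope_hmap_splice hq hg hα (fun _ => τ) (fun _ => hτ)
    (eventually_atTop.2 ⟨N₀, fun N hN => by rwa [htail N hN]⟩) hL
  refine tendsto_nhds_unique hlim (tendsto_const_nhds.congr' ?_)
  exact eventually_atTop.2 ⟨N₀, fun N hN => by dsimp only; rw [htail N hN, hexcess N hN]⟩

lemma not_tendsto_slope_of_eventually_eq_one (hq : 1 < q)
    (hg : ∀ α, ThetaSeq q u α → g (hmap q u α) = Phi q α) (hα : ThetaSeq q u α)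
    (hev : ∀ᶠ n in atTop, α n = 1) {b : ℕ} (hb : ThetaSeq q u fun _ => b) (hb2 : 2 ≤ b)
    (L : ℝ) :
    ¬ Tendsto (slope g (hmap q u α)) (𝓝[Dset q u \ {hmap q u α}] (hmap q u α)) (𝓝 L) := by
  intro hL
  obtain ⟨N₀, hN₀⟩ := eventually_atTop.1 hev
  set one : ℕ → ℕ := fun _ => 1
  set bs : ℕ → ℕ := fun _ => b
  set τ := splice bs one 1
  have hone : ThetaSeq q u one := by
    have h := hα N₀
    rw [hN₀ N₀ le_rfl] at h
    exact fun _ => h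
  have hτ : ThetaSeq q u τ := hb.splice hone 1
  have hbτ : Phi q τ - Phi q bs = (q : ℝ)⁻¹ * (Phi q one - Phi q bs) := by
    simpa using Phi_splice_sub hq hb hone 1
  have hb1 : Phi q bs ≠ Phi q one := (Phi_const_injective hq).ne (by omega)
  have hqinv : (q : ℝ)⁻¹ ≠ 1 := (inv_lt_one_of_one_lt₀ (Nat.one_lt_cast.2 hq)).ne
  have hτb : Phi q τ ≠ Phi q bs := by
    rw [← sub_ne_zero, hbτ]
    exact mul_ne_zero (by positivity) (sub_ne_zero.2 hb1.symm)
  have hτ1 : Phi q τ ≠ Phi q one := by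
    rw [← sub_ne_zero, show Phi q τ - Phi q one = (1 - (q : ℝ)⁻¹) * (Phi q bs - Phi q one) by
      linear_combination hbτ]
    exact mul_ne_zero (sub_ne_zero.2 hqinv.symm) (sub_ne_zero.2 hb1)
  set s := slope g (hmap q u one) (hmap q u bs)
  have hs : s ≠ 0 := by
    rw [Ne, slope_eq_zero_iff, hg _ hone, hg _ hb]
    exact hb1.symm
  have hsτ : slope g (hmap q u one) (hmap q u τ) = s := by
    have h₁ := eq_mul_slope_of_tail_eq_one hq hg hα hN₀ hL hτ hτ1
    have h₂ := eq_mul_slope_of_tail_eq_one hq hg hα hN₀ hL hb hb1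
    exact mul_left_cancel₀ (by positivity) (h₁.symm.trans h₂)
  have hcollinear : slope g (hmap q u bs) (hmap q u τ) = s :=
    slope_eq_of_slope_eq_of_slope_eq (hmap_ne_of_Phi_ne hg hb hτ hτb.symm) rfl hsτ
  have hselfaffine : slope g (hmap q u bs) (hmap q u τ) = (q : ℝ) ^ (b - 1) * s := by
    have hexcess : excess bs 1 = b - 1 := by simp [excess, bs]
    rw [slope_hmap_splice hq hg hb hone 1, hexcess, slope_comm]
  have : (q : ℝ) ^ (b - 1) = 1 := mul_right_cancel₀ hs (by rw [one_mul, ← hselfaffine, hcollinear])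
  exact (one_lt_pow₀ (Nat.one_lt_cast.2 hq) (by omega)).ne' this

end Cases

lemma exists_theta_const_pair {q : ℕ} (hq : 4 ≤ q) (u : ℕ) :
    ∃ c d : ℕ, c ≠ d ∧ 2 ≤ d ∧ (ThetaSeq q u fun _ => c) ∧ ThetaSeq q u fun _ => d := by
  obtain ⟨c, d, hcd, hd2, hc, hd⟩ : ∃ c d : ℕ, c ≠ d ∧ 2 ≤ d ∧
      (1 ≤ c ∧ c ≤ q - 1 ∧ c ≠ u) ∧ (1 ≤ d ∧ d ≤ q - 1 ∧ d ≠ u) := by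
    rcases eq_or_ne u 1 with rfl | h1
    · exact ⟨2, 3, by omega⟩
    rcases eq_or_ne u 2 with rfl | h2
    · exact ⟨1, 3, by omega⟩
    · exact ⟨1, 2, by omega⟩
  exact ⟨c, d, hcd, hd2, fun _ => hc, fun _ => hd⟩

theorem stmt17_general (q : ℕ) (hq : 4 ≤ q) (u : ℕ)
    (g : ℝ → ℝ) (hg : ∀ α, ThetaSeq q u α → g (hmap q u α) = Phi q α)
    (x₀ : ℝ) (hx₀ : x₀ ∈ Dset q u) :
    ¬ ∃ L : ℝ,
      Tendsto (fun x => (g x - g x₀) / (x - x₀))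
        (nhdsWithin x₀ (Dset q u \ {x₀})) (nhds L) := by
  rintro ⟨L, hL⟩
  obtain ⟨α, hα, rfl⟩ := hx₀
  rw [← slope_fun_def_field] at hL
  obtain ⟨c, d, hcd, hd2, hc, hd⟩ := exists_theta_const_pair hq u
  have hq1 : 1 < q := by omega
  by_cases hev : ∀ᶠ n in atTop, α n = 1
  · exact not_tendsto_slope_of_eventually_eq_one hq1 hg hα hev hd hd2 L hL
  · exact not_tendsto_slope_of_frequently_ne_one hq1 hg hα (not_eventually.1 hev) hc hd
      ((Phi_const_injective hq1).ne hcd) L hL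

/-- `g` (any function on `ℝ` satisfying `g(h(α)) = Φ(α)`) is nowhere
differentiable on `D`: at no point `x₀ ∈ D` does the difference quotient
`(g(x) - g(x₀))/(x - x₀)` tend to a limit as `x → x₀` within `D \ {x₀}`. -/
theorem stmt17 (q : ℕ) (hq : 4 ≤ q) (u : ℕ) (hu : u ≤ q - 1)
    (g : ℝ → ℝ) (hg : ∀ α, ThetaSeq q u α → g (hmap q u α) = Phi q α)
    (x₀ : ℝ) (hx₀ : x₀ ∈ Dset q u) :
    ¬ ∃ L : ℝ,
      Tendsto (fun x => (g x - g x₀) / (x - x₀))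
        (nhdsWithin x₀ (Dset q u \ {x₀})) (nhds L) :=
  stmt17_general q hq u g hg x₀ hx₀
end

section
/- For every α ∈ Θ^{ℕ≥1}, letting α' denote the shifted sequence α'_n = α_{n+1}, one has Φ(α') = q·Φ(α) − α_1 and h(α') = u/(q−1) + q^{α_1}·( h(α) − u/(q−1) ) − (α_1 − u). (These identities express the commutation relation g(σ^{α_1}(x)) = σ(g(x)) between g and the shift operators of the corresponding expansions.) -/
open Filter Topology MeasureTheory

/-! Both identities come from splitting off the first term of the series and reindexing.
The series converge absolutely since the digits are bounded and `S_n(α) ≥ n`. -/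

lemma summable_div_pow_of_abs_le {r C : ℝ} (hr : 1 < r) {f : ℕ → ℝ} {e : ℕ → ℕ}
    (hf : ∀ n, |f n| ≤ C) (he : ∀ n, n ≤ e n) : Summable fun n => f n / r ^ e n := by
  have hr₀ : 0 < r := zero_lt_one.trans hr
  refine Summable.of_norm_bounded
    ((summable_geometric_of_lt_one (inv_nonneg.2 hr₀.le) (inv_lt_one_of_one_lt₀ hr)).mul_left C)
    fun n => ?_
  calc ‖f n / r ^ e n‖ = |f n| / r ^ e n := by
        rw [Real.norm_eq_abs, abs_div, abs_of_pos (pow_pos hr₀ _)]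
    _ ≤ C / r ^ n :=
      div_le_div₀ ((abs_nonneg _).trans (hf n)) (hf n) (by positivity)
        (pow_le_pow_right₀ hr.le (he n))
    _ = C * r⁻¹ ^ n := by rw [inv_pow, div_eq_mul_inv]

lemma Ssum_shift_add (α : ℕ → ℕ) (n : ℕ) :
    Ssum (fun m => α (m + 1)) n + α 0 = Ssum α (n + 1) :=
  (Finset.sum_range_succ' α (n + 1)).symm

lemma succ_le_Ssum {α : ℕ → ℕ} (hα : ∀ n, 1 ≤ α n) (n : ℕ) :
    n + 1 ≤ Ssum α n := by
  simpa [Ssum] using Finset.card_nsmul_le_sum (Finset.range (n + 1)) α 1 fun i _ => hα i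

lemma Phi_shift {q C : ℕ} (hq : 1 < q) {α : ℕ → ℕ} (hC : ∀ n, α n ≤ C) :
    Phi q (fun n => α (n + 1)) = q * Phi q α - α 0 := by
  have hq₀ : (q : ℝ) ≠ 0 := by positivity
  have hs : Summable fun n => (α n : ℝ) / (q : ℝ) ^ (n + 1) :=
    summable_div_pow_of_abs_le (C := C) (by exact_mod_cast hq)
      (fun n => by rw [Nat.abs_cast]; exact_mod_cast hC n) fun n => n.le_succ
  have hshift :
      Phi q (fun n => α (n + 1)) = q * ∑' n, (α (n + 1) : ℝ) / (q : ℝ) ^ (n + 1 + 1) := by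
    rw [Phi, ← tsum_mul_left]
    congr with n
    field_simp
    ring
  rw [hshift, Phi, hs.tsum_eq_zero_add]
  field_simp
  ring

lemma hmap_shift {q u C : ℕ} (hq : 1 < q) {α : ℕ → ℕ} (hpos : ∀ n, 1 ≤ α n)
    (hC : ∀ n, α n ≤ C) :
    hmap q u (fun n => α (n + 1)) =
      u / (q - 1) + (q : ℝ) ^ α 0 * (hmap q u α - u / (q - 1)) - (α 0 - u) := by
  have hq₀ : (q : ℝ) ≠ 0 := by positivity
  have hs : Summable fun n => ((α n : ℝ) - u) / (q : ℝ) ^ Ssum α n := by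
    refine summable_div_pow_of_abs_le (C := C + u) (by exact_mod_cast hq) (fun n => ?_)
      fun n => (succ_le_Ssum hpos n).trans' n.le_succ
    have hαC : (α n : ℝ) ≤ C := by exact_mod_cast hC n
    rw [abs_le]
    constructor <;> linarith [(α n).cast_nonneg (α := ℝ)]
  have hterm : ∀ n, ((α (n + 1) : ℝ) - u) / (q : ℝ) ^ Ssum (fun m => α (m + 1)) n =
      (q : ℝ) ^ α 0 * (((α (n + 1) : ℝ) - u) / (q : ℝ) ^ Ssum α (n + 1)) := fun n => by
    rw [← Ssum_shift_add, pow_add]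
    field_simp
  rw [hmap, tsum_congr hterm, tsum_mul_left, hmap, hs.tsum_eq_zero_add]
  simp only [Ssum, zero_add, Finset.sum_range_one]
  field_simp
  ring

theorem stmt18_general (q : ℕ) (hq : 4 ≤ q) (u : ℕ)
    (α : ℕ → ℕ) (hα : ThetaSeq q u α) :
    Phi q (fun n => α (n + 1)) = (q : ℝ) * Phi q α - (α 0 : ℝ) ∧
    hmap q u (fun n => α (n + 1)) =
      (u : ℝ) / ((q : ℝ) - 1) +
        (q : ℝ) ^ (α 0) * (hmap q u α - (u : ℝ) / ((q : ℝ) - 1)) -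
        ((α 0 : ℝ) - (u : ℝ)) := by
  have hq₁ : 1 < q := by omega
  have hdigit : ∀ n, α n ≤ q - 1 := fun n => (hα n).2.1
  exact ⟨Phi_shift hq₁ hdigit, hmap_shift hq₁ (fun n => (hα n).1) hdigit⟩

/-- for every `α ∈ Θ^{ℕ≥1}`, with `α'` the shifted sequence
`α'_n = α_{n+1}`, one has `Φ(α') = q Φ(α) - α_1` and
`h(α') = u/(q-1) + q^{α_1} (h(α) - u/(q-1)) - (α_1 - u)`. -/
theorem stmt18 (q : ℕ) (hq : 4 ≤ q) (u : ℕ) (hu : u ≤ q - 1)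
    (α : ℕ → ℕ) (hα : ThetaSeq q u α) :
    Phi q (fun n => α (n + 1)) = (q : ℝ) * Phi q α - (α 0 : ℝ) ∧
    hmap q u (fun n => α (n + 1)) =
      (u : ℝ) / ((q : ℝ) - 1) +
        (q : ℝ) ^ (α 0) * (hmap q u α - (u : ℝ) / ((q : ℝ) - 1)) -
        ((α 0 : ℝ) - (u : ℝ)) :=
  stmt18_general q hq u α hα
end
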